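/- Let φ(s) = (|s+1| − |s−1|)/2 for s ∈ ℝ, let a > 1 and c ∈ ℝ. Then a real number h satisfies h = a·φ(h) + c if and only if one of the following holds: (1) h = a + c and c ≥ 1 − a; (2) h = −a + c and c ≤ a − 1; (3) h = c/(1 − a) and |c| ≤ a − 1. In particular, for |c| < a − 1 the equation has exactly three solutions (the network has multiple states beyond the critical parameter a = 1). -/

import Mathlib

/-!
On each of the regions `h ≥ 1`, `h ≤ -1` and `|h| ≤ 1` the sigmoid is affine (the constants `1`,
`-1` and the identity), so there the equation `h = a φ(h) + c` is linear, with unique solution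
`a + c`, `-a + c` and `c / (1 - a)` respectively; each is a solution exactly when it lies in its
region. For `|c| < a - 1` the three candidates lie in the pairwise disjoint regions `h > 1`,
`h < -1` and `|h| < 1`, hence are distinct.
-/

/-- The piecewise-linear sigmoid activation `φ(s) = (|s+1| − |s−1|)/2`. -/
noncomputable def plSigmoid (s : ℝ) : ℝ := (|s + 1| - |s - 1|) / 2

lemma plSigmoid_of_one_le {s : ℝ} (hs : 1 ≤ s) : plSigmoid s = 1 := by
  rw [plSigmoid, abs_of_nonneg (by linarith), abs_of_nonneg (by linarith)]
  ring

lemma plSigmoid_of_le_neg_one {s : ℝ} (hs : s ≤ -1) : plSigmoid s = -1 := by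
  rw [plSigmoid, abs_of_nonpos (by linarith), abs_of_nonpos (by linarith)]
  ring

lemma plSigmoid_of_abs_le {s : ℝ} (hs : |s| ≤ 1) : plSigmoid s = s := by
  obtain ⟨hs₁, hs₂⟩ := abs_le.mp hs
  rw [plSigmoid, abs_of_nonneg (by linarith), abs_of_nonpos (by linarith)]
  ring

section FixedPoint

variable {a c : ℝ}

lemma eq_mul_add_iff_eq_div_one_sub (ha : a ≠ 1) (h : ℝ) : h = a * h + c ↔ h = c / (1 - a) := by
  rw [eq_div_iff (sub_ne_zero.mpr ha.symm)]
  constructor <;> intro hh <;> linarith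

lemma abs_div_one_sub_le_one_iff (ha : 1 < a) : |c / (1 - a)| ≤ 1 ↔ |c| ≤ a - 1 := by
  rw [abs_div, abs_of_neg (by linarith : 1 - a < 0), neg_sub, div_le_one (by linarith)]

lemma abs_div_one_sub_lt_one_iff (ha : 1 < a) : |c / (1 - a)| < 1 ↔ |c| < a - 1 := by
  rw [abs_div, abs_of_neg (by linarith : 1 - a < 0), neg_sub, div_lt_one (by linarith)]

theorem eq_mul_plSigmoid_add_iff (ha : 1 < a) (h : ℝ) :
    h = a * plSigmoid h + c ↔
      (h = a + c ∧ 1 - a ≤ c) ∨ (h = -a + c ∧ c ≤ a - 1) ∨ (h = c / (1 - a) ∧ |c| ≤ a - 1) := by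
  have hlin : h = a * h + c ↔ h = c / (1 - a) := eq_mul_add_iff_eq_div_one_sub ha.ne' h
  constructor
  · intro hh
    rcases le_or_gt 1 h with h₁ | h₁
    · rw [plSigmoid_of_one_le h₁] at hh
      exact .inl ⟨by linarith, by linarith⟩
    rcases le_or_gt h (-1) with h₂ | h₂
    · rw [plSigmoid_of_le_neg_one h₂] at hh
      exact .inr (.inl ⟨by linarith, by linarith⟩)
    have hs : |h| ≤ 1 := abs_le.mpr ⟨h₂.le, h₁.le⟩
    rw [plSigmoid_of_abs_le hs, hlin] at hh
    rw [hh, abs_div_one_sub_le_one_iff ha] at hs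
    exact .inr (.inr ⟨hh, hs⟩)
  · rintro (⟨rfl, hc⟩ | ⟨rfl, hc⟩ | ⟨hh, hc⟩)
    · rw [plSigmoid_of_one_le (by linarith)]
      ring
    · rw [plSigmoid_of_le_neg_one (by linarith)]
      ring
    · rw [← abs_div_one_sub_le_one_iff ha, ← hh] at hc
      rw [plSigmoid_of_abs_le hc, hlin]
      exact hh

theorem setOf_eq_mul_plSigmoid_add (ha : 1 < a) (hc : |c| < a - 1) :
    {h : ℝ | h = a * plSigmoid h + c} = {a + c, -a + c, c / (1 - a)} := by
  obtain ⟨hc₁, hc₂⟩ := abs_lt.mp hc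
  ext h
  simp only [Set.mem_ofPred_eq, Set.mem_insert_iff, Set.mem_singleton_iff,
    eq_mul_plSigmoid_add_iff ha]
  have : 1 - a ≤ c ∧ c ≤ a - 1 ∧ |c| ≤ a - 1 := ⟨by linarith, by linarith, hc.le⟩
  tauto

theorem ncard_setOf_eq_mul_plSigmoid_add (ha : 1 < a) (hc : |c| < a - 1) :
    {h : ℝ | h = a * plSigmoid h + c}.ncard = 3 := by
  obtain ⟨hc₁, hc₂⟩ := abs_lt.mp hc
  obtain ⟨hm₁, hm₂⟩ := abs_lt.mp ((abs_div_one_sub_lt_one_iff ha).mpr hc)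
  exact Set.ncard_eq_three.mpr ⟨_, _, _, ne_of_gt (by linarith), ne_of_gt (by linarith),
    ne_of_lt (by linarith), setOf_eq_mul_plSigmoid_add ha hc⟩

end FixedPoint

theorem stmt_17 (a c : ℝ) (ha : 1 < a) :
    (∀ h : ℝ, h = a * plSigmoid h + c ↔
      (h = a + c ∧ 1 - a ≤ c) ∨ (h = -a + c ∧ c ≤ a - 1) ∨
      (h = c / (1 - a) ∧ |c| ≤ a - 1)) ∧
    (|c| < a - 1 → {h : ℝ | h = a * plSigmoid h + c}.ncard = 3) :=
  ⟨eq_mul_plSigmoid_add_iff ha, ncard_setOf_eq_mul_plSigmoid_add ha⟩
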